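/- Let k be a field and A the quotient of the path algebra of the quiver with vertices 1, 2, arrows α : 2 → 1 and a loop β at 2, by the relations β² = 0 and αβ = 0 (composing left to right as in right modules). Then: (a) A/Ae_1A is isomorphic as a right A-module to the projective module P_2 = e_2A, so Ae_1A is a stratifying ideal; (b) the right A-module A/Ae_2A ≅ S_1 has an infinite minimal projective resolution ... → P_2 →^β P_2 →^β P_2 →^α P_1 → S_1 → 0, and Ae_2A is also a stratifying ideal. -/

import Mathlib

open CategoryTheory MulOpposite

section Defs

variable {A : Type} [Ring A]

/-- Left multiplication by `a` as a map of right `A`-modules (`Aᵐᵒᵖ`-modules). -/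
def lmulOp (a : A) : A →ₗ[Aᵐᵒᵖ] A where
  toFun x := a * x
  map_add' x y := mul_add a x y
  map_smul' r x := by
    simp only [MulOpposite.smul_eq_mul_unop, RingHom.id_apply, mul_assoc]

theorem lmulOp_mem_span {a y z : A} (h : a * y ∈ Submodule.span Aᵐᵒᵖ ({z} : Set A)) :
    ∀ x ∈ Submodule.span Aᵐᵒᵖ ({y} : Set A),
      lmulOp a x ∈ Submodule.span Aᵐᵒᵖ ({z} : Set A) := by
  intro x hx
  obtain ⟨r, rfl⟩ := Submodule.mem_span_singleton.mp hx
  have : lmulOp a (r • y) = r • (a * y) := by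
    simp only [lmulOp, LinearMap.coe_mk, AddHom.coe_mk, MulOpposite.smul_eq_mul_unop,
      mul_assoc]
  rw [this]
  exact Submodule.smul_mem _ r h

/-- Left multiplication by `a`, restricted to a map `yA → zA` between cyclic right
`A`-modules (assuming `a * y ∈ zA`). -/
def lmulSpanMap (a y z : A) (h : a * y ∈ Submodule.span Aᵐᵒᵖ ({z} : Set A)) :
    (Submodule.span Aᵐᵒᵖ ({y} : Set A)) →ₗ[Aᵐᵒᵖ] (Submodule.span Aᵐᵒᵖ ({z} : Set A)) :=
  (lmulOp a).restrict (lmulOp_mem_span h)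

/-- For a right `A`-module `M` and a two-sided ideal of `A` represented by the ideal
`J` of `Aᵐᵒᵖ`, the induced map `M ⧸ M·J → N ⧸ N·J`; these quotients compute
`M ⊗_A (A ⧸ J)`. -/
noncomputable def torQuotMap (J : Ideal Aᵐᵒᵖ)
    {M N : ModuleCat Aᵐᵒᵖ} (f : M ⟶ N) :
    (M ⧸ (J • (⊤ : Submodule Aᵐᵒᵖ M))) →ₗ[Aᵐᵒᵖ] (N ⧸ (J • (⊤ : Submodule Aᵐᵒᵖ N))) :=
  Submodule.mapQ _ _ f.hom (Submodule.smul_le.mpr fun r hr m _ =>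
    Submodule.mem_comap.mpr (by
      rw [map_smul]
      exact Submodule.smul_mem_smul hr Submodule.mem_top))

/-- `Tor_i^A(A/J, A/J) = 0` for all `i > 0` (where `J` represents a two-sided ideal of
`A` as an ideal of `Aᵐᵒᵖ`): for every projective resolution of the right module `A/J`,
applying `- ⊗_A (A/J)` yields a complex exact in all positive degrees. This is the
statement that the ideal is *stratifying*, equivalently that `A → A/J` is a
homological ring epimorphism. -/
def IsStratifying (A : Type) [Ring A] (J : Ideal Aᵐᵒᵖ) : Prop :=
  ∀ (Q : ProjectiveResolution
      (ModuleCat.of Aᵐᵒᵖ (A ⧸ (J • (⊤ : Submodule Aᵐᵒᵖ A))))) (i : ℕ),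
    Function.Exact (torQuotMap J (Q.complex.d (i + 2) (i + 1)))
      (torQuotMap J (Q.complex.d (i + 1) i))

end Defs

/-!
Write `1 = e₁ + e₂`. The basis shows that the Peirce corners are `e₂Ae₁ = 0`, `e₁Ae₂ = kα` and
`e₂Ae₂ = ke₂ ⊕ kβ`. The first gives `Ae₁A = e₁A`, so `A/Ae₁A ≅ e₂A` is projective and is its own
resolution. For `e₂`, one gets `e₁A ∩ Ae₂A = αA`, and on `e₂A = ke₂ ⊕ kβ` left multiplication
by `α` or by `β` has kernel `βA`; this is the periodic resolution of `S₁`. Its terms in positive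
degrees are all `e₂A`, which is killed by `- ⊗_A A/Ae₂A`, so `Tor` vanishes there. Finally
`αAα = 0 = βAβ` puts `α` and `β` in the radical, which is minimality.
-/

section ModuleResolution

variable {R : Type} [Ring R]

noncomputable def ModuleCat.projectiveResolutionOfExact {M : ModuleCat.{0} R}
    (X : ℕ → ModuleCat R) [∀ n, Projective (X n)] (d : ∀ n, X (n + 1) ⟶ X n)
    (ε : X 0 ⟶ M) (hε : Function.Surjective ε) (hε₀ : Function.Exact (d 0) ε)
    (hd : ∀ n, Function.Exact (d (n + 1)) (d n)) : ProjectiveResolution M where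
  complex := ChainComplex.of X d fun n => ModuleCat.hom_ext (hd n).linearMap_comp_eq_zero
  projective n := inferInstanceAs (Projective (X n))
  π := (ChainComplex.toSingle₀Equiv _ _).symm
    ⟨ε, by change d 0 ≫ ε = 0; exact ModuleCat.hom_ext hε₀.linearMap_comp_eq_zero⟩
  quasiIso := ⟨fun n => by
    cases n with
    | zero =>
      rw [ChainComplex.quasiIsoAt₀_iff, ShortComplex.quasiIso_iff_of_zeros' _ rfl rfl rfl,
        ShortComplex.ShortExact.moduleCat_exact_iff_function_exact, ModuleCat.epi_iff_surjective]
      exact ⟨hε₀, hε⟩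
    | succ n =>
      rw [quasiIsoAt_iff_exactAt' (hL := ChainComplex.exactAt_succ_single_obj ..),
        HomologicalComplex.exactAt_iff' _ (n + 1 + 1) (n + 1) n (by simp) (by simp),
        ShortComplex.ShortExact.moduleCat_exact_iff_function_exact]
      simp only [HomologicalComplex.sc', HomologicalComplex.shortComplexFunctor'_obj_f,
        HomologicalComplex.shortComplexFunctor'_obj_g, ChainComplex.of_d]
      exact hd n⟩

end ModuleResolution

section Stratifying

variable {A : Type} [Ring A] (J : Ideal Aᵐᵒᵖ)

noncomputable def quotSmulTopFunctor : ModuleCat Aᵐᵒᵖ ⥤ ModuleCat Aᵐᵒᵖ where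
  obj M := ModuleCat.of Aᵐᵒᵖ (M ⧸ (J • (⊤ : Submodule Aᵐᵒᵖ M)))
  map f := ModuleCat.ofHom (torQuotMap J f)
  map_id _ := ModuleCat.hom_ext (Submodule.linearMap_qext _ rfl)
  map_comp _ _ := ModuleCat.hom_ext (Submodule.linearMap_qext _ rfl)

instance : (quotSmulTopFunctor J).Additive where
  map_add := ModuleCat.hom_ext (Submodule.linearMap_qext _ rfl)

theorem isStratifying_of_smul_top_eq_top
    (P : ProjectiveResolution (ModuleCat.of Aᵐᵒᵖ (A ⧸ (J • (⊤ : Submodule Aᵐᵒᵖ A)))))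
    (hP : ∀ i : ℕ, J • (⊤ : Submodule Aᵐᵒᵖ (P.complex.X (i + 1))) = ⊤) :
    IsStratifying A J := by
  intro Q i
  have hPi : Limits.IsZero ((quotSmulTopFunctor J).obj (P.complex.X (i + 1))) :=
    @ModuleCat.isZero_of_subsingleton _ _ _ (Submodule.Quotient.subsingleton_iff.mpr (hP i))
  have hQ : Limits.IsZero
      ((((quotSmulTopFunctor J).mapHomologicalComplex _).obj Q.complex).homology (i + 1)) :=
    ((HomologicalComplex.exactAt_iff_isZero_homology _ _).mp
      (ShortComplex.exact_of_isZero_X₂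
        ((((quotSmulTopFunctor J).mapHomologicalComplex _).obj P.complex).sc (i + 1)) hPi)).of_iso
      ((Q.isoLeftDerivedObj _ (i + 1)).symm ≪≫ P.isoLeftDerivedObj _ (i + 1))
  have hE := (HomologicalComplex.exactAt_iff_isZero_homology _ _).mpr hQ
  rwa [HomologicalComplex.exactAt_iff' _ (i + 2) (i + 1) i (by simp) (by simp),
    ShortComplex.ShortExact.moduleCat_exact_iff_function_exact] at hE

theorem isStratifying_of_projective
    (hP : Module.Projective Aᵐᵒᵖ (A ⧸ (J • (⊤ : Submodule Aᵐᵒᵖ A)))) : IsStratifying A J := by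
  let P := ProjectiveResolution.self (ModuleCat.of Aᵐᵒᵖ (A ⧸ (J • (⊤ : Submodule Aᵐᵒᵖ A))))
  refine isStratifying_of_smul_top_eq_top J P fun i => ?_
  have : Subsingleton (P.complex.X (i + 1)) := ModuleCat.subsingleton_of_isZero
    (HomologicalComplex.isZero_single_obj_X (ComplexShape.down ℕ) 0 _ (i + 1) (by simp))
  exact Subsingleton.elim _ _

end Stratifying

section Idempotent

variable {A : Type} [Ring A]

theorem mul_mem_span_singleton (e y : A) : e * y ∈ Submodule.span Aᵐᵒᵖ ({e} : Set A) :=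
  Submodule.mem_span_singleton.mpr ⟨op y, rfl⟩

theorem mem_span_singleton_iff_mul_eq_self {e x : A} (he : IsIdempotentElem e) :
    x ∈ Submodule.span Aᵐᵒᵖ ({e} : Set A) ↔ e * x = x := by
  refine ⟨fun hx => ?_, fun hx => hx ▸ mul_mem_span_singleton e x⟩
  obtain ⟨r, rfl⟩ := Submodule.mem_span_singleton.mp hx
  rw [MulOpposite.smul_eq_mul_unop, ← mul_assoc, he.eq]

def unopLinearEquiv (A : Type) [Ring A] : Aᵐᵒᵖ ≃ₗ[Aᵐᵒᵖ] A where
  toFun := unop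
  invFun := op
  map_add' _ _ := rfl
  map_smul' _ _ := rfl
  left_inv _ := rfl
  right_inv _ := rfl

theorem projective_span_singleton {e : A} (he : IsIdempotentElem e) :
    Module.Projective Aᵐᵒᵖ (Submodule.span Aᵐᵒᵖ ({e} : Set A)) :=
  have : Module.Projective Aᵐᵒᵖ A := .of_equiv (unopLinearEquiv A)
  .of_split (Submodule.span Aᵐᵒᵖ ({e} : Set A)).subtype
    ((lmulOp e).codRestrict _ (mul_mem_span_singleton e))
    (LinearMap.ext fun x => Subtype.ext ((mem_span_singleton_iff_mul_eq_self he).mp x.2))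

noncomputable def quotSpanSingletonEquivOfAddEqOne {e₁ e₂ : A} (he₁ : IsIdempotentElem e₁)
    (he₂ : IsIdempotentElem e₂) (hsum : e₁ + e₂ = 1) :
    (A ⧸ Submodule.span Aᵐᵒᵖ ({e₁} : Set A)) ≃ₗ[Aᵐᵒᵖ]
      Submodule.span Aᵐᵒᵖ ({e₂} : Set A) :=
  let f := (lmulOp e₂).codRestrict _ (mul_mem_span_singleton e₂)
  have hker : LinearMap.ker f = Submodule.span Aᵐᵒᵖ ({e₁} : Set A) := by
    ext x
    have hx : e₂ * x = x - e₁ * x := by rw [eq_sub_iff_add_eq', ← add_mul, hsum, one_mul]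
    rw [mem_span_singleton_iff_mul_eq_self he₁, LinearMap.mem_ker, ← Subtype.coe_inj]
    change e₂ * x = 0 ↔ _
    rw [hx, sub_eq_zero, eq_comm]
  (Submodule.quotEquivOfEq _ _ hker.symm).trans (f.quotKerEquivOfSurjective fun y =>
    ⟨y, Subtype.ext ((mem_span_singleton_iff_mul_eq_self he₂).mp y.2)⟩)

theorem mem_smul_top_span_singleton {e : A} (he : IsIdempotentElem e) {I : Ideal Aᵐᵒᵖ}
    {z : Submodule.span Aᵐᵒᵖ ({e} : Set A)} (hz : op (z : A) ∈ I) :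
    z ∈ I • (⊤ : Submodule Aᵐᵒᵖ (Submodule.span Aᵐᵒᵖ ({e} : Set A))) := by
  have h : z = op (z : A) • ⟨e, Submodule.mem_span_singleton_self e⟩ :=
    Subtype.ext ((mem_span_singleton_iff_mul_eq_self he).mp z.2).symm
  rw [h]
  exact Submodule.smul_mem_smul hz Submodule.mem_top

theorem smul_top_span_singleton_eq_top {e : A} (he : IsIdempotentElem e) {I : Ideal Aᵐᵒᵖ}
    (h : op e ∈ I) : I • (⊤ : Submodule Aᵐᵒᵖ (Submodule.span Aᵐᵒᵖ ({e} : Set A))) = ⊤ := by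
  refine eq_top_iff.mpr fun z _ => mem_smul_top_span_singleton he ?_
  rw [← (mem_span_singleton_iff_mul_eq_self he).mp z.2, op_mul]
  exact I.mul_mem_left _ h

theorem range_lmulSpanMap_le_smul_top {a y z : A} (hz : IsIdempotentElem z) {I : Ideal Aᵐᵒᵖ}
    (ha : op a ∈ I) (h : a * y ∈ Submodule.span Aᵐᵒᵖ ({z} : Set A)) :
    LinearMap.range (lmulSpanMap a y z h) ≤
      I • (⊤ : Submodule Aᵐᵒᵖ (Submodule.span Aᵐᵒᵖ ({z} : Set A))) := by
  rintro _ ⟨x, rfl⟩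
  refine mem_smul_top_span_singleton hz ?_
  change op (a * x) ∈ I
  rw [op_mul]
  exact I.mul_mem_left _ ha

theorem op_mem_jacobson_bot_of_mul_mul_eq_zero {x : A} (hx : ∀ s, x * s * x = 0) :
    op x ∈ (⊥ : Ideal Aᵐᵒᵖ).jacobson := by
  refine Ideal.mem_jacobson_iff.mpr fun y => ?_
  have hnil : IsNilpotent (y * op x) := ⟨2, by
    rw [pow_two, mul_assoc, ← mul_assoc (op x), ← op_unop y, ← op_mul, ← op_mul, ← mul_assoc,
      hx, op_zero, mul_zero]⟩
  obtain ⟨u, hu⟩ := hnil.isUnit_add_one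
  refine ⟨↑u⁻¹, ?_⟩
  rw [Ideal.mem_bot, mul_assoc, ← mul_add_one, ← hu, u.inv_mul, sub_self]

end Idempotent

section TwoSided

variable {A : Type} [Ring A]

-- The two-sided ideal `AeA`, as a right ideal of `A`, i.e. an ideal of `Aᵐᵒᵖ`.
def twoSidedSpanOp (e : A) : Ideal Aᵐᵒᵖ :=
  Ideal.span (Set.range fun p : A × A => op (p.1 * e * p.2))

theorem op_mem_twoSidedSpanOp (e : A) : op e ∈ twoSidedSpanOp e :=
  Ideal.subset_span ⟨(1, 1), by simp⟩

theorem mul_mul_mem_twoSidedSpanOp_smul_top (e x y : A) :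
    x * e * y ∈ twoSidedSpanOp e • (⊤ : Submodule Aᵐᵒᵖ A) := by
  rw [← one_mul (x * e * y), ← op_smul_eq_mul]
  exact Submodule.smul_mem_smul (Ideal.subset_span ⟨(x, y), rfl⟩) Submodule.mem_top

theorem twoSidedSpanOp_smul_top_le {e : A} {S : Submodule Aᵐᵒᵖ A}
    (hS : ∀ x y, x * e * y ∈ S) : twoSidedSpanOp e • (⊤ : Submodule Aᵐᵒᵖ A) ≤ S := by
  refine Submodule.smul_le.mpr fun r hr m _ => ?_
  induction hr using Submodule.span_induction with
  | mem _ hx =>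
    obtain ⟨⟨x, y⟩, rfl⟩ := hx
    rw [op_smul_eq_mul, ← mul_assoc, ← mul_assoc]
    exact hS _ _
  | zero => simp
  | add _ _ _ _ ihx ihy => rw [add_smul]; exact S.add_mem ihx ihy
  | smul a _ _ ih => rw [smul_eq_mul, mul_smul]; exact S.smul_mem a ih

theorem twoSidedSpanOp_smul_top_eq_span {e : A} (he : ∀ x, x * e = e * x * e) :
    twoSidedSpanOp e • (⊤ : Submodule Aᵐᵒᵖ A) = Submodule.span Aᵐᵒᵖ ({e} : Set A) := by
  refine le_antisymm (twoSidedSpanOp_smul_top_le fun x y => ?_) ?_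
  · rw [he, mul_assoc, mul_assoc]
    exact mul_mem_span_singleton e _
  · rw [Submodule.span_le, Set.singleton_subset_iff]
    simpa using mul_mul_mem_twoSidedSpanOp_smul_top e 1 1

theorem isStratifying_twoSidedSpanOp_of_exact {e₁ e₂ a b : A}
    (he₁ : IsIdempotentElem e₁) (he₂ : IsIdempotentElem e₂)
    (ha : a * e₂ ∈ Submodule.span Aᵐᵒᵖ ({e₁} : Set A))
    (hb : b * e₂ ∈ Submodule.span Aᵐᵒᵖ ({e₂} : Set A))
    (hsurj : Function.Surjective ((twoSidedSpanOp e₂ • (⊤ : Submodule Aᵐᵒᵖ A)).mkQ.comp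
      (Submodule.span Aᵐᵒᵖ ({e₁} : Set A)).subtype))
    (hexa : Function.Exact (lmulSpanMap a e₂ e₁ ha)
      ((twoSidedSpanOp e₂ • (⊤ : Submodule Aᵐᵒᵖ A)).mkQ.comp
        (Submodule.span Aᵐᵒᵖ ({e₁} : Set A)).subtype))
    (hexba : Function.Exact (lmulSpanMap b e₂ e₂ hb) (lmulSpanMap a e₂ e₁ ha))
    (hexbb : Function.Exact (lmulSpanMap b e₂ e₂ hb) (lmulSpanMap b e₂ e₂ hb)) :
    IsStratifying A (twoSidedSpanOp e₂) := by
  have := projective_span_singleton he₁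
  have := projective_span_singleton he₂
  let X : ℕ → ModuleCat Aᵐᵒᵖ
    | 0 => ModuleCat.of Aᵐᵒᵖ (Submodule.span Aᵐᵒᵖ ({e₁} : Set A))
    | _ + 1 => ModuleCat.of Aᵐᵒᵖ (Submodule.span Aᵐᵒᵖ ({e₂} : Set A))
  have : ∀ n, Projective (X n)
    | 0 => inferInstanceAs (Projective (ModuleCat.of _ _))
    | _ + 1 => inferInstanceAs (Projective (ModuleCat.of _ _))
  let d : ∀ n, X (n + 1) ⟶ X n
    | 0 => ModuleCat.ofHom (lmulSpanMap a e₂ e₁ ha)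
    | _ + 1 => ModuleCat.ofHom (lmulSpanMap b e₂ e₂ hb)
  let P := ModuleCat.projectiveResolutionOfExact X d (ModuleCat.ofHom _) hsurj hexa
    fun | 0 => hexba | _ + 1 => hexbb
  exact isStratifying_of_smul_top_eq_top _ P fun _ =>
    smul_top_span_singleton_eq_top he₂ (op_mem_twoSidedSpanOp e₂)

end TwoSided

section Exactness

variable {k A : Type} [Field k] [Ring A] [Algebra k A]

theorem exact_lmulSpanMap_mkQ_comp_subtype {e₁ e₂ a : A} {S : Submodule Aᵐᵒᵖ A}
    (he₁ : IsIdempotentElem e₁) (hae : a * e₂ = a)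
    (ha : a * e₂ ∈ Submodule.span Aᵐᵒᵖ ({e₁} : Set A)) (haS : ∀ y, a * y ∈ S)
    (hS : ∀ z ∈ S, e₁ * z ∈ Submodule.span Aᵐᵒᵖ ({a} : Set A)) :
    Function.Exact (lmulSpanMap a e₂ e₁ ha)
      (S.mkQ.comp (Submodule.span Aᵐᵒᵖ ({e₁} : Set A)).subtype) := by
  intro y
  simp only [LinearMap.comp_apply, Submodule.mkQ_apply, Submodule.subtype_apply,
    Submodule.Quotient.mk_eq_zero, Set.mem_range]
  constructor
  · intro hy
    obtain ⟨r, hr⟩ := Submodule.mem_span_singleton.mp (hS _ hy)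
    refine ⟨⟨e₂ * unop r, mul_mem_span_singleton e₂ _⟩, Subtype.ext ?_⟩
    change a * (e₂ * unop r) = y
    rw [← mul_assoc, hae, ← MulOpposite.smul_eq_mul_unop, hr,
      (mem_span_singleton_iff_mul_eq_self he₁).mp y.2]
  · rintro ⟨x, rfl⟩
    exact haS x

theorem surjective_mkQ_comp_subtype {e₁ e₂ : A} {S : Submodule Aᵐᵒᵖ A} (hsum : e₁ + e₂ = 1)
    (hS : ∀ y, e₂ * y ∈ S) :
    Function.Surjective (S.mkQ.comp (Submodule.span Aᵐᵒᵖ ({e₁} : Set A)).subtype) := by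
  intro q
  obtain ⟨y, rfl⟩ := S.mkQ_surjective q
  refine ⟨⟨e₁ * y, mul_mem_span_singleton e₁ y⟩, (Submodule.Quotient.eq S).mpr ?_⟩
  have h : e₁ * y - y = -(e₂ * y) := eq_neg_of_add_eq_zero_left (by
    rw [sub_add_eq_add_sub, ← add_mul, hsum, one_mul, sub_self])
  change e₁ * y - y ∈ S
  rw [h]
  exact S.neg_mem (hS y)

theorem exact_lmulSpanMap_lmulSpanMap {e a b z : A} (hbe : b * e = b) (hae : a * e = a)
    (hab : a * b = 0) (ha0 : a ≠ 0)
    (hcorner : ∀ y ∈ Submodule.span Aᵐᵒᵖ ({e} : Set A), ∃ c d : k, y = c • e + d • b)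
    (hb : b * e ∈ Submodule.span Aᵐᵒᵖ ({e} : Set A))
    (ha : a * e ∈ Submodule.span Aᵐᵒᵖ ({z} : Set A)) :
    Function.Exact (lmulSpanMap b e e hb) (lmulSpanMap a e z ha) := by
  intro y
  rw [Set.mem_range, ← Subtype.coe_inj]
  change a * y = 0 ↔ _
  obtain ⟨c, d, hy⟩ := hcorner y y.2
  have hay : a * y = c • a := by
    rw [hy, mul_add, mul_smul_comm, mul_smul_comm, hae, hab, smul_zero, add_zero]
  constructor
  · intro h
    have hc : c = 0 := (smul_eq_zero.mp (hay ▸ h)).resolve_right ha0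
    refine ⟨⟨d • e, Submodule.smul_of_tower_mem _ d (Submodule.mem_span_singleton_self e)⟩, ?_⟩
    refine Subtype.ext ?_
    change b * (d • e) = y
    rw [mul_smul_comm, hbe, hy, hc, zero_smul, zero_add]
  · rintro ⟨x, rfl⟩
    change a * (b * x) = 0
    rw [← mul_assoc, hab, zero_mul]

end Exactness

section Corners

variable {k A : Type} [Field k] [Ring A] [Algebra k A]

theorem mul_mul_self_eq_zero_of_corner_eq_zero {e f a : A} (hea : e * a = a) (haf : a * f = a)
    (h : ∀ x, f * x * e = 0) (s : A) : a * s * a = 0 := by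
  calc a * s * a = a * f * s * (e * a) := by rw [haf, hea]
    _ = a * (f * s * e) * a := by simp only [mul_assoc]
    _ = 0 := by rw [h, mul_zero, zero_mul]

theorem mul_mul_self_eq_zero_of_corner_eq_span {e b : A} (hbe : b * e = b) (heb : e * b = b)
    (hbb : b * b = 0) (h : ∀ x, ∃ c d : k, e * x * e = c • e + d • b) (s : A) :
    b * s * b = 0 := by
  obtain ⟨c, d, hcd⟩ := h s
  calc b * s * b = b * e * s * (e * b) := by rw [hbe, heb]
    _ = b * (e * s * e) * b := by simp only [mul_assoc]
    _ = 0 := by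
      rw [hcd, mul_add, add_mul, mul_smul_comm, mul_smul_comm, smul_mul_assoc, smul_mul_assoc,
        hbe, hbb, zero_mul, smul_zero, smul_zero, add_zero]

theorem exists_eq_smul_add_smul_of_mem_span_singleton {e₁ e₂ b : A} (he₂ : IsIdempotentElem e₂)
    (hsum : e₁ + e₂ = 1) (h₂₁ : ∀ x, e₂ * x * e₁ = 0)
    (h₂₂ : ∀ x, ∃ c d : k, e₂ * x * e₂ = c • e₂ + d • b) {y : A}
    (hy : y ∈ Submodule.span Aᵐᵒᵖ ({e₂} : Set A)) : ∃ c d : k, y = c • e₂ + d • b := by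
  have : y = e₂ * y * e₂ := by
    calc y = e₂ * y * (e₁ + e₂) := by
          rw [hsum, mul_one, (mem_span_singleton_iff_mul_eq_self he₂).mp hy]
      _ = e₂ * y * e₂ := by rw [mul_add, h₂₁, zero_add]
  rw [this]
  exact h₂₂ y

theorem mul_mem_span_of_mem_twoSidedSpanOp_smul_top {e₁ e₂ a : A}
    (h : ∀ x, ∃ c : k, e₁ * x * e₂ = c • a) :
    ∀ z ∈ twoSidedSpanOp e₂ • (⊤ : Submodule Aᵐᵒᵖ A),
      e₁ * z ∈ Submodule.span Aᵐᵒᵖ ({a} : Set A) := by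
  refine twoSidedSpanOp_smul_top_le
    (S := (Submodule.span Aᵐᵒᵖ ({a} : Set A)).comap (lmulOp e₁)) fun x y => ?_
  obtain ⟨c, hc⟩ := h x
  change e₁ * (x * e₂ * y) ∈ Submodule.span Aᵐᵒᵖ ({a} : Set A)
  rw [← mul_assoc, ← mul_assoc, hc, smul_mul_assoc, ← mul_smul_comm]
  exact mul_mem_span_singleton a _

end Corners

section PathAlgebra

variable {k A : Type} [Field k] [Ring A] [Algebra k A] {e₁ e₂ α β : A}

theorem exists_eq_basis_sum (b : Module.Basis (Fin 4) k A) (hb : ⇑b = ![e₁, e₂, α, β])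
    (x : A) : ∃ c : Fin 4 → k, x = c 0 • e₁ + c 1 • e₂ + c 2 • α + c 3 • β :=
  ⟨b.repr x, by simpa [Fin.sum_univ_four, hb] using (b.sum_repr x).symm⟩

theorem e₂_mul_mul_e₁_eq_zero (b : Module.Basis (Fin 4) k A) (hb : ⇑b = ![e₁, e₂, α, β])
    (h21 : e₂ * e₁ = 0) (hα₁ : e₁ * α = α) (hβ₂ : β * e₂ = β) (x : A) :
    e₂ * x * e₁ = 0 := by
  have he₂α : e₂ * α = 0 := by rw [← hα₁, ← mul_assoc, h21, zero_mul]
  have hβe₁ : β * e₁ = 0 := by rw [← hβ₂, mul_assoc, h21, mul_zero]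
  obtain ⟨c, rfl⟩ := exists_eq_basis_sum b hb x
  simp [mul_add, add_mul, mul_assoc, h21, he₂α, hβe₁]

theorem exists_e₁_mul_mul_e₂_eq_smul (b : Module.Basis (Fin 4) k A)
    (hb : ⇑b = ![e₁, e₂, α, β]) (h12 : e₁ * e₂ = 0) (hα₁ : e₁ * α = α) (hα₂ : α * e₂ = α)
    (hβ₁ : e₂ * β = β) (x : A) : ∃ c : k, e₁ * x * e₂ = c • α := by
  have he₁β : e₁ * β = 0 := by rw [← hβ₁, ← mul_assoc, h12, zero_mul]
  obtain ⟨c, rfl⟩ := exists_eq_basis_sum b hb x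
  exact ⟨c 2, by simp [mul_add, add_mul, mul_assoc, h12, hα₁, hα₂, he₁β]⟩

theorem exists_e₂_mul_mul_e₂_eq (b : Module.Basis (Fin 4) k A) (hb : ⇑b = ![e₁, e₂, α, β])
    (he₂ : IsIdempotentElem e₂) (h21 : e₂ * e₁ = 0) (hα₁ : e₁ * α = α) (hβ₁ : e₂ * β = β)
    (hβ₂ : β * e₂ = β) (x : A) : ∃ c d : k, e₂ * x * e₂ = c • e₂ + d • β := by
  have he₂α : e₂ * α = 0 := by rw [← hα₁, ← mul_assoc, h21, zero_mul]
  obtain ⟨c, rfl⟩ := exists_eq_basis_sum b hb x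
  exact ⟨c 1, c 3, by simp [mul_add, add_mul, h21, he₂α, he₂.eq, hβ₁, hβ₂]⟩

end PathAlgebra

/-- let `A` be the quotient of the path algebra of the quiver with
vertices `1, 2`, an arrow `α : 2 → 1` and a loop `β` at `2`, by the relations `β² = 0`,
`αβ = 0` (axiomatized by its basis `{e₁, e₂, α, β}` and multiplication rules). Then:
(a) `A/Ae₁A` is isomorphic as a right `A`-module to `P₂ = e₂A`, and `Ae₁A` is a
stratifying ideal; (b) the right module `A/Ae₂A ≅ S₁` has the infinite minimal
projective resolution `⋯ → P₂ →^β P₂ →^β P₂ →^α P₁ → S₁ → 0`, and `Ae₂A` is also a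
stratifying ideal. -/
theorem stmt18 (k A : Type) [Field k] [Ring A] [Algebra k A]
    (e₁ e₂ α β : A)
    (he₁ : IsIdempotentElem e₁) (he₂ : IsIdempotentElem e₂)
    (h12 : e₁ * e₂ = 0) (h21 : e₂ * e₁ = 0) (hsum : e₁ + e₂ = 1)
    (hα₁ : e₁ * α = α) (hα₂ : α * e₂ = α)
    (hβ₁ : e₂ * β = β) (hβ₂ : β * e₂ = β)
    (hββ : β * β = 0) (hαβ : α * β = 0)
    (b : Module.Basis (Fin 4) k A) (hb : ⇑b = ![e₁, e₂, α, β])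
    (J₁ J₂ : Ideal Aᵐᵒᵖ)
    (hJ₁ : J₁ = Ideal.span (Set.range fun p : A × A => op (p.1 * e₁ * p.2)))
    (hJ₂ : J₂ = Ideal.span (Set.range fun p : A × A => op (p.1 * e₂ * p.2))) :
    -- (a) A/Ae₁A ≅ e₂A as right A-modules, and Ae₁A is stratifying
    Nonempty ((A ⧸ (J₁ • (⊤ : Submodule Aᵐᵒᵖ A))) ≃ₗ[Aᵐᵒᵖ]
        (Submodule.span Aᵐᵒᵖ ({e₂} : Set A))) ∧
    IsStratifying A J₁ ∧
    -- (b) the infinite minimal projective resolution of S₁ = A/Ae₂A, and Ae₂A is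
    -- stratifying
    (Module.Projective Aᵐᵒᵖ (Submodule.span Aᵐᵒᵖ ({e₁} : Set A)) ∧
      Module.Projective Aᵐᵒᵖ (Submodule.span Aᵐᵒᵖ ({e₂} : Set A)) ∧
      ∃ (hα : α * e₂ ∈ Submodule.span Aᵐᵒᵖ ({e₁} : Set A))
        (hβ : β * e₂ ∈ Submodule.span Aᵐᵒᵖ ({e₂} : Set A)),
        Function.Surjective
          ((J₂ • (⊤ : Submodule Aᵐᵒᵖ A)).mkQ.comp
            (Submodule.span Aᵐᵒᵖ ({e₁} : Set A)).subtype) ∧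
        Function.Exact (lmulSpanMap α e₂ e₁ hα)
          ((J₂ • (⊤ : Submodule Aᵐᵒᵖ A)).mkQ.comp
            (Submodule.span Aᵐᵒᵖ ({e₁} : Set A)).subtype) ∧
        Function.Exact (lmulSpanMap β e₂ e₂ hβ) (lmulSpanMap α e₂ e₁ hα) ∧
        Function.Exact (lmulSpanMap β e₂ e₂ hβ) (lmulSpanMap β e₂ e₂ hβ) ∧
        -- minimality: the images of the differentials lie in the radical
        LinearMap.range (lmulSpanMap α e₂ e₁ hα) ≤
          (Ideal.jacobson (⊥ : Ideal Aᵐᵒᵖ)) •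
            (⊤ : Submodule Aᵐᵒᵖ (Submodule.span Aᵐᵒᵖ ({e₁} : Set A))) ∧
        LinearMap.range (lmulSpanMap β e₂ e₂ hβ) ≤
          (Ideal.jacobson (⊥ : Ideal Aᵐᵒᵖ)) •
            (⊤ : Submodule Aᵐᵒᵖ (Submodule.span Aᵐᵒᵖ ({e₂} : Set A)))) ∧
    IsStratifying A J₂ := by
  subst hJ₁ hJ₂
  have h₂₁ := e₂_mul_mul_e₁_eq_zero b hb h21 hα₁ hβ₂
  have h₂₂ := exists_e₂_mul_mul_e₂_eq b hb he₂ h21 hα₁ hβ₁ hβ₂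
  have hα : α * e₂ ∈ Submodule.span Aᵐᵒᵖ ({e₁} : Set A) := by
    rw [hα₂, ← hα₁]; exact mul_mem_span_singleton e₁ α
  have hβ : β * e₂ ∈ Submodule.span Aᵐᵒᵖ ({e₂} : Set A) := by
    rw [hβ₂, ← hβ₁]; exact mul_mem_span_singleton e₂ β
  have hI₁ := twoSidedSpanOp_smul_top_eq_span fun x => by
    rw [← one_mul (x * e₁), ← hsum, add_mul, ← mul_assoc, ← mul_assoc, h₂₁, add_zero]
  let φ := (Submodule.quotEquivOfEq _ _ hI₁).trans
    (quotSpanSingletonEquivOfAddEqOne he₁ he₂ hsum)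
  have hsurj := surjective_mkQ_comp_subtype hsum fun y => by
    simpa using mul_mul_mem_twoSidedSpanOp_smul_top e₂ 1 y
  have hexα := exact_lmulSpanMap_mkQ_comp_subtype he₁ hα₂ hα
    (fun y => by simpa [hα₂] using mul_mul_mem_twoSidedSpanOp_smul_top e₂ α y)
    (mul_mem_span_of_mem_twoSidedSpanOp_smul_top
      (exists_e₁_mul_mul_e₂_eq_smul b hb h12 hα₁ hα₂ hβ₁))
  have hcorner := fun y =>
    exists_eq_smul_add_smul_of_mem_span_singleton (y := y) he₂ hsum h₂₁ h₂₂
  have hexβα := exact_lmulSpanMap_lmulSpanMap hβ₂ hα₂ hαβ (by simpa [hb] using b.ne_zero 2)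
    hcorner hβ hα
  have hexββ := exact_lmulSpanMap_lmulSpanMap hβ₂ hβ₂ hββ (by simpa [hb] using b.ne_zero 3)
    hcorner hβ hβ
  refine ⟨⟨φ⟩, isStratifying_of_projective _ ((projective_span_singleton he₂).of_equiv φ.symm),
    ⟨projective_span_singleton he₁, projective_span_singleton he₂, hα, hβ, hsurj, hexα, hexβα,
      hexββ, ?_, ?_⟩,
    isStratifying_twoSidedSpanOp_of_exact he₁ he₂ hα hβ hsurj hexα hexβα hexββ⟩
  · exact range_lmulSpanMap_le_smul_top he₁ (op_mem_jacobson_bot_of_mul_mul_eq_zero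
      (mul_mul_self_eq_zero_of_corner_eq_zero hα₁ hα₂ h₂₁)) hα
  · exact range_lmulSpanMap_le_smul_top he₂ (op_mem_jacobson_bot_of_mul_mul_eq_zero
      (mul_mul_self_eq_zero_of_corner_eq_span hβ₂ hβ₁ hββ h₂₂)) hβ
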